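/- Let H = (V, E) be a hypergraph in the family L0'. Then for every real polynomial p such that for every positive integer k, p(k) equals the number of weak proper k-colorings of H, and for every real number λ with 0 < λ < 1, one has (-1)^{|V|+1} · p(λ) > 0. In particular the chromatic polynomial of H has no zero in the interval (0, 1). -/

import Mathlib

open Finset Polynomial

variable {α : Type}

/-- `φ : α → Fin k` is a weak proper coloring of the hypergraph with edge set `E`:
every edge contains two vertices with different colors. -/
def IsWeakProper [DecidableEq α] (E : Finset (Finset α)) {k : ℕ} (φ : α → Fin k) : Prop :=
  ∀ e ∈ E, ∃ u ∈ e, ∃ v ∈ e, φ u ≠ φ v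

instance [DecidableEq α] (E : Finset (Finset α)) {k : ℕ} (φ : α → Fin k) :
    Decidable (IsWeakProper E φ) := by
  unfold IsWeakProper; infer_instance

/-- The number of weak proper `k`-colorings of the hypergraph with vertex set `α`
(a finite type) and edge set `E`. -/
def countColorings [Fintype α] [DecidableEq α] (E : Finset (Finset α)) (k : ℕ) : ℕ :=
  (Finset.univ.filter fun φ : α → Fin k => IsWeakProper E φ).card

/-- `(v 0, es 0, v 1, es 1, …, v (t-1), es (t-1), v 0)` is a cycle in the hypergraph
with edge set `E`: `t ≥ 2`, the vertices are pairwise distinct, the edges are pairwise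
distinct edges of `E`, and `{v i, v (i+1)} ⊆ es i` for every `i` (cyclically). -/
def IsCycle (E : Finset (Finset α)) (t : ℕ) (v : ZMod t → α) (es : ZMod t → Finset α) : Prop :=
  2 ≤ t ∧ Function.Injective v ∧ Function.Injective es ∧
    (∀ i, es i ∈ E) ∧ ∀ i, v i ∈ es i ∧ v (i + 1) ∈ es i

/-- Membership in the family `L0`: every edge has even cardinality, and for every cycle
there exist two distinct vertices `x, y` in the union of the edges of the cycle with
`{x, y} ∈ E`. -/
def MemL0 [DecidableEq α] (E : Finset (Finset α)) : Prop :=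
  (∀ e ∈ E, Even e.card) ∧
    ∀ (t : ℕ) (v : ZMod t → α) (es : ZMod t → Finset α), IsCycle E t v es →
      ∃ x y : α, x ≠ y ∧ (∃ i, x ∈ es i) ∧ (∃ j, y ∈ es j) ∧ ({x, y} : Finset α) ∈ E

/-- Membership in the family `L1`: every edge has even cardinality, and every cycle
contains an edge of cardinality `2`. -/
def MemL1 (E : Finset (Finset α)) : Prop :=
  (∀ e ∈ E, Even e.card) ∧
    ∀ (t : ℕ) (v : ZMod t → α) (es : ZMod t → Finset α), IsCycle E t v es →
      ∃ i, (es i).card = 2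

/-- The simple graph whose edges are the `2`-element members of `E`. -/
def pairGraph [DecidableEq α] (E : Finset (Finset α)) : SimpleGraph α where
  Adj x y := x ≠ y ∧ ({x, y} : Finset α) ∈ E
  symm := by
    constructor
    intro x y h
    exact ⟨Ne.symm h.1, by rw [Finset.pair_comm]; exact h.2⟩
  loopless := by constructor; intro x h; exact h.1 rfl

/-- Membership in the family `L0'`: `E` is in `L0` and the graph on the vertex set
with edge set `E₂ = {e ∈ E : |e| = 2}` is connected. -/
def MemL0' [DecidableEq α] (E : Finset (Finset α)) : Prop :=
  MemL0 E ∧ (pairGraph (E.filter fun e => e.card = 2)).Connected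

/-- A hypergraph is Sperner if no edge is contained in another distinct edge. -/
def IsSperner (E : Finset (Finset α)) : Prop :=
  ∀ e₁ ∈ E, ∀ e₂ ∈ E, e₁ ⊆ e₂ → e₁ = e₂

/-- The edge set of the Sperner subhypergraph: the edges of `E` that are minimal
with respect to inclusion. -/
def minimalEdges [DecidableEq α] (E : Finset (Finset α)) : Finset (Finset α) :=
  E.filter fun e => ∀ e' ∈ E, e' ⊆ e → e' = e

/-- The map identifying all vertices of `e` into the single new vertex `none`;
vertices outside `e` are kept (as `some`-values). -/
def contractMap [DecidableEq α] (e : Finset α) : α → Option {v : α // v ∉ e} :=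
  fun v => if h : v ∈ e then none else some ⟨v, h⟩

/-- The edge set of the contraction `H/e`: remove `e` and identify all of its
vertices into the single new vertex `none`. -/
def contractEdges [DecidableEq α] (E : Finset (Finset α)) (e : Finset α) :
    Finset (Finset (Option {v : α // v ∉ e})) :=
  (E.erase e).image fun e' => e'.image (contractMap e)

section Counting

variable {α : Type} [DecidableEq α]

lemma contractMap_eq_none {e : Finset α} {v : α} (hv : v ∈ e) : contractMap e v = none := by
  simp [contractMap, hv]

lemma contractMap_eq_some {e : Finset α} {v : α} (hv : v ∉ e) :
    contractMap e v = some ⟨v, hv⟩ := by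
  simp [contractMap, hv]

lemma some_mem_image_contractMap {e e' : Finset α} {w : {v : α // v ∉ e}} :
    some w ∈ e'.image (contractMap e) ↔ w.1 ∈ e' := by
  constructor
  · rintro h
    obtain ⟨u, hu, hcu⟩ := Finset.mem_image.1 h
    by_cases hue : u ∈ e
    · rw [contractMap_eq_none hue] at hcu; exact absurd hcu (by simp)
    · rw [contractMap_eq_some hue] at hcu
      obtain rfl : u = w.1 := congrArg (fun o => (Option.map Subtype.val o).getD u) hcu
      exact hu
  · intro h
    exact Finset.mem_image.2 ⟨w.1, h, contractMap_eq_some w.2⟩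

lemma none_mem_image_contractMap {e e' : Finset α} :
    (none ∈ e'.image (contractMap e)) ↔ ∃ u ∈ e', u ∈ e := by
  constructor
  · intro h
    obtain ⟨u, hu, hcu⟩ := Finset.mem_image.1 h
    by_cases hue : u ∈ e
    · exact ⟨u, hu, hue⟩
    · rw [contractMap_eq_some hue] at hcu; exact absurd hcu (by simp)
  · rintro ⟨u, hu, hue⟩
    exact Finset.mem_image.2 ⟨u, hu, contractMap_eq_none hue⟩

/-- properness of a coloring of the contraction, in terms of the composite coloring. -/
lemma isWeakProper_contract_iff {E : Finset (Finset α)} {f : Finset α} {k : ℕ}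
    (φ' : Option {v : α // v ∉ f} → Fin k) :
    IsWeakProper (contractEdges E f) φ' ↔ IsWeakProper (E.erase f) (φ' ∘ contractMap f) := by
  constructor
  · intro h e' he'
    have h2 := h (e'.image (contractMap f)) (Finset.mem_image.2 ⟨e', he', rfl⟩)
    obtain ⟨u, hu, v, hv, huv⟩ := h2
    obtain ⟨u0, hu0, rfl⟩ := Finset.mem_image.1 hu
    obtain ⟨v0, hv0, rfl⟩ := Finset.mem_image.1 hv
    exact ⟨u0, hu0, v0, hv0, huv⟩
  · intro h g hg
    obtain ⟨e', he', rfl⟩ := Finset.mem_image.1 hg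
    obtain ⟨u, hu, v, hv, huv⟩ := h e' he'
    exact ⟨_, Finset.mem_image_of_mem _ hu, _, Finset.mem_image_of_mem _ hv, huv⟩

lemma isWeakProper_insert_iff {E : Finset (Finset α)} {f : Finset α} {k : ℕ}
    (hf : f ∈ E) (φ : α → Fin k) :
    IsWeakProper E φ ↔ IsWeakProper (E.erase f) φ ∧ ∃ u ∈ f, ∃ v ∈ f, φ u ≠ φ v := by
  constructor
  · intro h
    exact ⟨fun e he => h e (Finset.mem_of_mem_erase he), h f hf⟩
  · rintro ⟨h1, h2⟩ e he
    by_cases hef : e = f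
    · exact hef ▸ h2
    · exact h1 e (Finset.mem_erase.2 ⟨hef, he⟩)

/-- Deletion–contraction at the level of counting colorings. -/
lemma count_dc {α : Type} [Fintype α] [DecidableEq α] (E : Finset (Finset α)) {f : Finset α}
    (hf : f ∈ E) (hfne : f.Nonempty) (k : ℕ) :
    countColorings (E.erase f) k = countColorings E k + countColorings (contractEdges E f) k := by
  classical
  obtain ⟨z, hz⟩ := hfne
  have hsplit :
      (Finset.univ.filter fun φ : α → Fin k => IsWeakProper (E.erase f) φ)
      = (Finset.univ.filter fun φ : α → Fin k => IsWeakProper E φ)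
        ∪ (Finset.univ.filter fun φ : α → Fin k =>
            IsWeakProper (E.erase f) φ ∧ ¬ ∃ u ∈ f, ∃ v ∈ f, φ u ≠ φ v) := by
    ext φ
    simp only [Finset.mem_union, Finset.mem_filter, Finset.mem_univ, true_and]
    constructor
    · intro h
      by_cases hm : ∃ u ∈ f, ∃ v ∈ f, φ u ≠ φ v
      · exact Or.inl ((isWeakProper_insert_iff hf φ).2 ⟨h, hm⟩)
      · exact Or.inr ⟨h, hm⟩
    · rintro (h | ⟨h, _⟩)
      · exact fun e he => h e (Finset.mem_of_mem_erase he)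
      · exact h
  have hdisj : Disjoint
      (Finset.univ.filter fun φ : α → Fin k => IsWeakProper E φ)
      (Finset.univ.filter fun φ : α → Fin k =>
        IsWeakProper (E.erase f) φ ∧ ¬ ∃ u ∈ f, ∃ v ∈ f, φ u ≠ φ v) := by
    rw [Finset.disjoint_filter]
    intro φ _ h1 h2
    exact h2.2 (h1 f hf)
  have hcard : countColorings (E.erase f) k
      = countColorings E k + (Finset.univ.filter fun φ : α → Fin k =>
          IsWeakProper (E.erase f) φ ∧ ¬ ∃ u ∈ f, ∃ v ∈ f, φ u ≠ φ v).card := by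
    rw [countColorings, hsplit, Finset.card_union_of_disjoint hdisj]; rfl
  rw [hcard]
  congr 1
  -- bijection between colorings of the contraction and monochromatic-on-f colorings
  rw [countColorings]
  apply Finset.card_nbij'
    (i := fun φ => fun o : Option {v : α // v ∉ f} => Option.elim o (φ z) (fun w => φ w.1))
    (j := fun φ' => φ' ∘ contractMap f)
  · intro φ h
    simp only [Finset.mem_coe, Finset.mem_filter, Finset.mem_univ, true_and] at h ⊢
    obtain ⟨h1, h2⟩ := h
    push_neg at h2
    have hcomp : (fun o => Option.elim o (φ z) (fun w : {v : α // v ∉ f} => φ w.1))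
        ∘ contractMap f = φ := by
      funext v
      by_cases hv : v ∈ f
      · simp only [Function.comp_apply, contractMap_eq_none hv, Option.elim]
        exact h2 z hz v hv
      · simp only [Function.comp_apply, contractMap_eq_some hv, Option.elim]
    rw [isWeakProper_contract_iff, hcomp]
    exact h1
  · intro φ' h
    simp only [Finset.mem_coe, Finset.mem_filter, Finset.mem_univ, true_and] at h ⊢
    refine ⟨(isWeakProper_contract_iff φ').1 h, ?_⟩
    push_neg
    intro u hu v hv
    simp only [Function.comp_apply, contractMap_eq_none hu, contractMap_eq_none hv]
  · intro φ h
    simp only [Finset.mem_coe, Finset.mem_filter, Finset.mem_univ, true_and] at h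
    push_neg at h
    funext v
    by_cases hv : v ∈ f
    · simp only [Function.comp_apply, contractMap_eq_none hv, Option.elim]
      exact h.2 z hz v hv
    · simp only [Function.comp_apply, contractMap_eq_some hv, Option.elim]
  · intro φ' _
    funext o
    match o with
    | none => simp [Function.comp_apply, contractMap_eq_none hz, Option.elim]
    | some w => simp [Function.comp_apply, contractMap_eq_some w.2, Option.elim]

lemma minimalEdges_subset {E : Finset (Finset α)} : minimalEdges E ⊆ E :=
  Finset.filter_subset _ E

lemma exists_minimal_subedge (E : Finset (Finset α)) (e : Finset α) :
    e ∈ E → ∃ m ∈ minimalEdges E, m ⊆ e := by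
  induction e using Finset.strongInduction with
  | _ e ih =>
    intro he
    by_cases hm : ∀ e' ∈ E, e' ⊆ e → e' = e
    · exact ⟨e, Finset.mem_filter.2 ⟨he, hm⟩, Finset.Subset.refl e⟩
    · push_neg at hm
      obtain ⟨e', he', hsub, hne⟩ := hm
      obtain ⟨m, hmm, hms⟩ := ih e' (Finset.ssubset_iff_subset_ne.2 ⟨hsub, hne⟩) he'
      exact ⟨m, hmm, hms.trans hsub⟩

lemma isWeakProper_minimal_iff {E : Finset (Finset α)} {k : ℕ} (φ : α → Fin k) :
    IsWeakProper (minimalEdges E) φ ↔ IsWeakProper E φ := by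
  constructor
  · intro h e he
    obtain ⟨m, hmm, hms⟩ := exists_minimal_subedge E e he
    obtain ⟨u, hu, v, hv, huv⟩ := h m hmm
    exact ⟨u, hms hu, v, hms hv, huv⟩
  · intro h e he
    exact h e (Finset.mem_filter.1 he).1

lemma count_minimal {α : Type} [Fintype α] [DecidableEq α] (E : Finset (Finset α)) (k : ℕ) :
    countColorings (minimalEdges E) k = countColorings E k := by
  unfold countColorings
  congr 1
  ext φ
  simp [isWeakProper_minimal_iff]

end Counting
section Poly

lemma poly_unique {p q : Polynomial ℝ}
    (h : ∀ k : ℕ, 0 < k → p.eval (k : ℝ) = q.eval (k : ℝ)) : p = q := by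
  apply Polynomial.eq_of_infinite_eval_eq
  apply Set.infinite_of_injective_forall_mem (f := fun n : ℕ => ((n + 1 : ℕ) : ℝ))
  case hi => intro a b hab; exact Nat.succ_injective (Nat.cast_injective hab)
  case hf => intro n; exact h (n + 1) (Nat.succ_pos n)

lemma countColorings_empty (α : Type) [Fintype α] [DecidableEq α] (k : ℕ) :
    countColorings (∅ : Finset (Finset α)) k = k ^ Fintype.card α := by
  unfold countColorings
  have hall : ∀ φ : α → Fin k, IsWeakProper (∅ : Finset (Finset α)) φ :=
    fun φ e he => absurd he (Finset.notMem_empty e)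
  rw [Finset.filter_true_of_mem (fun φ _ => hall φ)]
  rw [Finset.card_univ, Fintype.card_fun, Fintype.card_fin]

lemma contractEdges_nonempty {α : Type} [DecidableEq α] {E : Finset (Finset α)} {f : Finset α}
    (hne : ∀ e ∈ E, e.Nonempty) :
    ∀ g ∈ contractEdges E f, g.Nonempty := by
  intro g hg
  obtain ⟨e', he', rfl⟩ := Finset.mem_image.1 hg
  exact (hne e' (Finset.mem_of_mem_erase he')).image _

lemma contractEdges_card_le {α : Type} [DecidableEq α] {E : Finset (Finset α)} {f : Finset α}
    (hf : f ∈ E) : (contractEdges E f).card + 1 ≤ E.card := by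
  have h1 : (contractEdges E f).card ≤ (E.erase f).card := Finset.card_image_le
  have h2 : (E.erase f).card = E.card - 1 := Finset.card_erase_of_mem hf
  have h3 : 1 ≤ E.card := Finset.card_pos.2 ⟨f, hf⟩
  omega

lemma exists_chromP : ∀ (n : ℕ) (α : Type) [Fintype α] [DecidableEq α]
    (E : Finset (Finset α)), E.card ≤ n → (∀ e ∈ E, e.Nonempty) →
    ∃ q : Polynomial ℝ, ∀ k : ℕ, 0 < k → q.eval (k : ℝ) = countColorings E k := by
  intro n
  induction n with
  | zero =>
    intro α _ _ E hcard _
    obtain rfl : E = ∅ := Finset.card_eq_zero.1 (Nat.le_zero.1 hcard)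
    exact ⟨Polynomial.X ^ Fintype.card α, fun k hk => by
      rw [countColorings_empty]; push_cast; simp⟩
  | succ n ih =>
    intro α _ _ E hcard hne
    rcases E.eq_empty_or_nonempty with rfl | ⟨f, hf⟩
    · exact ⟨Polynomial.X ^ Fintype.card α, fun k hk => by
        rw [countColorings_empty]; push_cast; simp⟩
    · have hfne := hne f hf
      obtain ⟨q1, hq1⟩ := ih α (E.erase f)
        (by rw [Finset.card_erase_of_mem hf]; omega)
        (fun e he => hne e (Finset.mem_of_mem_erase he))
      obtain ⟨q2, hq2⟩ := ih (Option {v : α // v ∉ f}) (contractEdges E f)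
        (by have := contractEdges_card_le hf; omega)
        (contractEdges_nonempty hne)
      refine ⟨q1 - q2, fun k hk => ?_⟩
      have hdc := count_dc E hf hfne k
      have hcast : (countColorings (E.erase f) k : ℝ)
          = (countColorings E k : ℝ) + (countColorings (contractEdges E f) k : ℝ) := by
        exact_mod_cast congrArg (Nat.cast : ℕ → ℝ) hdc
      rw [Polynomial.eval_sub, hq1 k hk, hq2 k hk]
      linarith

end Poly

section Pendant

variable {α : Type} [Fintype α] [DecidableEq α]

/-- counting identity for a pendant vertex `z` whose unique edge is the `2`-edge `{z,w}`. -/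
lemma count_pendant (E : Finset (Finset α)) {z w : α}
    (hzw : z ≠ w) (hf : ({z, w} : Finset α) ∈ E)
    (honly : ∀ e ∈ E, z ∈ e → e = {z, w}) (k : ℕ) :
    countColorings E k = (countColorings (contractEdges E {z, w}) k) * (k - 1) := by
  classical
  set f : Finset α := {z, w} with hfdef
  have hzf : z ∈ f := by simp [hfdef]
  have hwf : w ∈ f := by simp [hfdef]
  set Ψ : (α → Fin k) → (Option {v : α // v ∉ f} → Fin k) :=
    fun φ => fun o => Option.elim o (φ w) (fun v => φ v.1) with hΨ
  have hΨcm : ∀ (φ : α → Fin k) (v : α), v ≠ z → (Ψ φ) (contractMap f v) = φ v := by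
    intro φ v hv
    by_cases hvf : v ∈ f
    · have : v = w := by
        rcases Finset.mem_insert.1 hvf with h | h
        · exact absurd h hv
        · exact Finset.mem_singleton.1 h
      subst this
      rw [contractMap_eq_none hvf]
      rfl
    · rw [contractMap_eq_some hvf]
      rfl
  have key : ∀ φ' : Option {v : α // v ∉ f} → Fin k,
      IsWeakProper (contractEdges E f) φ' →
      ∀ c : Fin k, c ≠ φ' none →
      IsWeakProper E (fun v => if v = z then c else φ' (contractMap f v)) := by
    intro φ' hφ' c hc e he
    by_cases hef : e = f
    · subst hef
      refine ⟨z, hzf, w, hwf, ?_⟩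
      simp only [if_pos rfl, if_neg (Ne.symm hzw)]
      rw [contractMap_eq_none hwf]
      exact hc
    · have hze : z ∉ e := fun hz => hef (honly e he hz)
      have hprop := (isWeakProper_contract_iff φ').1 hφ' e (Finset.mem_erase.2 ⟨hef, he⟩)
      obtain ⟨u, hu, v, hv, huv⟩ := hprop
      refine ⟨u, hu, v, hv, ?_⟩
      have hu' : u ≠ z := fun h => hze (h ▸ hu)
      have hv' : v ≠ z := fun h => hze (h ▸ hv)
      simp only [Function.comp_apply] at huv
      simp only [if_neg hu', if_neg hv']
      exact huv
  -- fiberwise counting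
  rw [countColorings, countColorings]
  rw [Finset.card_eq_sum_card_fiberwise (f := Ψ)
    (t := Finset.univ.filter fun φ' => IsWeakProper (contractEdges E f) φ')
    (by
      intro φ hφ
      simp only [Finset.mem_coe, Finset.mem_filter, Finset.mem_univ, true_and] at hφ ⊢
      rw [isWeakProper_contract_iff]
      intro e he
      have hze : z ∉ e := fun hz => (Finset.mem_erase.1 he).1 (honly e (Finset.mem_of_mem_erase he) hz)
      obtain ⟨u, hu, v, hv, huv⟩ := hφ e (Finset.mem_of_mem_erase he)
      refine ⟨u, hu, v, hv, ?_⟩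
      rw [Function.comp_apply, Function.comp_apply,
        hΨcm φ u (fun h => hze (h ▸ hu)), hΨcm φ v (fun h => hze (h ▸ hv))]
      exact huv)]
  rw [Finset.sum_congr rfl (g := fun _ => k - 1), Finset.sum_const, smul_eq_mul]
  intro φ' hφ'
  simp only [Finset.mem_filter, Finset.mem_univ, true_and] at hφ'
  -- the fiber over φ' is in bijection with colors different from φ' none
  have : (Finset.univ.filter fun c : Fin k => c ≠ φ' none).card = k - 1 := by
    rw [Finset.filter_ne', Finset.card_erase_of_mem (Finset.mem_univ _), Finset.card_univ,
      Fintype.card_fin]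
  rw [← this]
  apply Finset.card_nbij' (i := fun φ => φ z)
    (j := fun c => fun v => if v = z then c else φ' (contractMap f v))
  · intro φ hφ
    simp only [Finset.mem_coe, Finset.mem_filter, Finset.mem_univ, true_and] at hφ ⊢
    obtain ⟨hφp, hφΨ⟩ := hφ
    obtain ⟨u, hu, v, hv, huv⟩ := hφp f hf
    have hval : ∀ x ∈ f, x ≠ z → φ x = φ w := by
      intro x hx hxz
      have : x = w := by
        rcases Finset.mem_insert.1 hx with h | h
        · exact absurd h hxz
        · exact Finset.mem_singleton.1 h
      rw [this]
    have hφz : φ z ≠ φ w := by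
      intro hcon
      apply huv
      have hu' : φ u = φ w := by
        by_cases huz : u = z
        · rw [huz, hcon]
        · exact hval u hu huz
      have hv' : φ v = φ w := by
        by_cases hvz : v = z
        · rw [hvz, hcon]
        · exact hval v hv hvz
      rw [hu', hv']
    have : φ' none = φ w := by rw [← hφΨ]; rfl
    rw [this]
    exact hφz
  · intro c hc
    simp only [Finset.mem_coe, Finset.mem_filter, Finset.mem_univ, true_and] at hc ⊢
    constructor
    · exact key φ' hφ' c hc
    · funext o
      match o with
      | none =>
        show (if w = z then c else φ' (contractMap f w)) = φ' none
        rw [if_neg (Ne.symm hzw), contractMap_eq_none hwf]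
      | some v =>
        show (if v.1 = z then c else φ' (contractMap f v.1)) = φ' (some v)
        have hvz : v.1 ≠ z := fun h => v.2 (h ▸ hzf)
        rw [if_neg hvz, contractMap_eq_some v.2]
  · intro φ hφ
    simp only [Finset.mem_coe, Finset.mem_filter, Finset.mem_univ, true_and] at hφ
    obtain ⟨hφp, hφΨ⟩ := hφ
    funext v
    by_cases hvz : v = z
    · beta_reduce; rw [if_pos hvz, hvz]
    · beta_reduce; rw [if_neg hvz, ← hφΨ, hΨcm φ v hvz]
  · intro c hc
    simp

end Pendant
section Cycles

variable {α : Type} [DecidableEq α]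

/-- The cycle condition in the definition of `L0`. -/
def L0cyc (E : Finset (Finset α)) : Prop :=
  ∀ (t : ℕ) (v : ZMod t → α) (es : ZMod t → Finset α), IsCycle E t v es →
    ∃ x y : α, x ≠ y ∧ (∃ i, x ∈ es i) ∧ (∃ j, y ∈ es j) ∧ ({x, y} : Finset α) ∈ E

lemma isCycle_mono {E E' : Finset (Finset α)} (h : E ⊆ E') {t : ℕ} {v : ZMod t → α}
    {es : ZMod t → Finset α} (hc : IsCycle E t v es) : IsCycle E' t v es :=
  ⟨hc.1, hc.2.1, hc.2.2.1, fun i => h (hc.2.2.2.1 i), hc.2.2.2.2⟩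

lemma isCycle_rotate {E : Finset (Finset α)} {t : ℕ} {v : ZMod t → α}
    {es : ZMod t → Finset α} (hc : IsCycle E t v es) (c : ZMod t) :
    IsCycle E t (fun i => v (i + c)) (fun i => es (i + c)) := by
  obtain ⟨ht, hv, hes, hmem, hcond⟩ := hc
  refine ⟨ht, ?_, ?_, fun i => hmem (i + c), fun i => ?_⟩
  · intro a b hab
    have := hv hab
    exact add_right_cancel this
  · intro a b hab
    have := hes hab
    exact add_right_cancel this
  · exact ⟨(hcond (i + c)).1, by
      have := (hcond (i + c)).2
      rwa [show i + c + 1 = i + 1 + c by ring] at this⟩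

lemma contractMap_ne {f : Finset α} {x y : α} (hxy : x ≠ y) (hnb : ¬(x ∈ f ∧ y ∈ f)) :
    contractMap f x ≠ contractMap f y := by
  intro h
  by_cases hx : x ∈ f <;> by_cases hy : y ∈ f
  · exact hnb ⟨hx, hy⟩
  · rw [contractMap_eq_none hx, contractMap_eq_some hy] at h; exact nomatch h
  · rw [contractMap_eq_some hx, contractMap_eq_none hy] at h; exact nomatch h
  · rw [contractMap_eq_some hx, contractMap_eq_some hy] at h
    exact hxy (congrArg (fun o => (Option.map Subtype.val o).getD x) h)

lemma pair_card_le (x y : α) : ({x, y} : Finset α).card ≤ 2 := by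
  apply le_trans (Finset.card_insert_le x {y})
  simp

lemma pair_not_subset {E : Finset (Finset α)} (hSp : IsSperner E) {x y : α} {f : Finset α}
    (hf : f ∈ E) (hcard : 3 ≤ f.card) (hxy : ({x, y} : Finset α) ∈ E) :
    ¬(x ∈ f ∧ y ∈ f) := by
  rintro ⟨hx, hy⟩
  have hsub : ({x, y} : Finset α) ⊆ f := by
    intro a ha
    rcases Finset.mem_insert.1 ha with rfl | ha
    · exact hx
    · exact (Finset.mem_singleton.1 ha) ▸ hy
  have := hSp _ hxy _ hf hsub
  have h2 := pair_card_le x y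
  rw [this] at h2
  omega

lemma pair_ne_of_card {x y : α} {f : Finset α} (hcard : 3 ≤ f.card) :
    ({x, y} : Finset α) ≠ f := by
  intro h
  have := pair_card_le x y
  rw [h] at this
  omega

lemma pair_mem_contractEdges {E : Finset (Finset α)} {f : Finset α} {x y : α}
    (hxy : ({x, y} : Finset α) ∈ E) (hnef : ({x, y} : Finset α) ≠ f) :
    ({contractMap f x, contractMap f y} : Finset (Option {v : α // v ∉ f})) ∈ contractEdges E f := by
  have himg : ({x, y} : Finset α).image (contractMap f)
      = {contractMap f x, contractMap f y} := by
    rw [Finset.image_insert, Finset.image_singleton]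
  exact Finset.mem_image.2 ⟨{x, y}, Finset.mem_erase.2 ⟨hnef, hxy⟩, himg⟩

/-- If all edges are `2`-edges, the cycle condition holds trivially. -/
lemma l0cyc_of_all_pairs {E : Finset (Finset α)} (h2 : ∀ e ∈ E, e.card = 2) : L0cyc E := by
  intro t v es hc
  have he0 := hc.2.2.2.1 0
  obtain ⟨x, y, hxy, hexy⟩ := Finset.card_eq_two.1 (h2 _ he0)
  exact ⟨x, y, hxy, ⟨0, by rw [hexy]; simp⟩, ⟨0, by rw [hexy]; simp⟩, hexy ▸ he0⟩

/-- The cycle condition survives deleting an edge of cardinality `≥ 3`. -/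
lemma l0cyc_erase {E : Finset (Finset α)} (hL : L0cyc E) {f : Finset α} (hcard : 3 ≤ f.card) :
    L0cyc (E.erase f) := by
  intro t v es hc
  obtain ⟨x, y, hxy, hi, hj, hp⟩ := hL t v es (isCycle_mono (Finset.erase_subset f E) hc)
  exact ⟨x, y, hxy, hi, hj, Finset.mem_erase.2 ⟨pair_ne_of_card hcard, hp⟩⟩

/-- The cycle condition survives passing to minimal edges (no edges of card `< 2`). -/
lemma l0cyc_minimal {E : Finset (Finset α)} (hL : L0cyc E) (hcard : ∀ e ∈ E, 2 ≤ e.card) :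
    L0cyc (minimalEdges E) := by
  intro t v es hc
  obtain ⟨x, y, hxy, hi, hj, hp⟩ := hL t v es (isCycle_mono (Finset.filter_subset _ E) hc)
  refine ⟨x, y, hxy, hi, hj, Finset.mem_filter.2 ⟨hp, ?_⟩⟩
  intro e' he' hsub
  apply Finset.eq_of_subset_of_card_le hsub
  exact le_trans (pair_card_le x y) (hcard e' he')

/-- Two-element cycle out of two edges sharing two vertices. -/
lemma isCycle_two {E : Finset (Finset α)} {e₁ e₂ : Finset α} (h1 : e₁ ∈ E) (h2 : e₂ ∈ E)
    (hne : e₁ ≠ e₂) {u v : α} (huv : u ≠ v) (hu1 : u ∈ e₁) (hu2 : u ∈ e₂)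
    (hv1 : v ∈ e₁) (hv2 : v ∈ e₂) :
    IsCycle E 2 (fun i : ZMod 2 => if i = 0 then u else v)
      (fun i : ZMod 2 => if i = 0 then e₁ else e₂) := by
  have hzmod : ∀ i : ZMod 2, i = 0 ∨ i = 1 := by decide
  refine ⟨le_refl 2, ?_, ?_, ?_, ?_⟩
  · intro a b hab
    rcases hzmod a with rfl | rfl <;> rcases hzmod b with rfl | rfl <;>
      simp only [if_pos, if_neg one_ne_zero, reduceIte] at hab <;> first
      | rfl
      | exact absurd hab huv
      | exact absurd hab.symm huv
  · intro a b hab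
    rcases hzmod a with rfl | rfl <;> rcases hzmod b with rfl | rfl <;>
      simp only [if_pos, if_neg one_ne_zero, reduceIte] at hab <;> first
      | rfl
      | exact absurd hab hne
      | exact absurd hab.symm hne
  · intro i
    rcases hzmod i with rfl | rfl <;> simp [h1, h2]
  · intro i
    rcases hzmod i with rfl | rfl
    · simpa using ⟨hu1, hv1⟩
    · have : (1 : ZMod 2) + 1 = 0 := by decide
      rw [this]
      simpa using ⟨hv2, hu2⟩

end Cycles
section Lift

variable {α : Type} [DecidableEq α]

lemma contract_pair_conclude {E : Finset (Finset α)} {f : Finset α} (hSp : IsSperner E)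
    (hf : f ∈ E) (hbig : 3 ≤ f.card) {t : ℕ} {es' : ZMod t → Finset (Option {v : α // v ∉ f})}
    {x y : α} (hxy : x ≠ y) (hp : ({x, y} : Finset α) ∈ E)
    (hix : ∃ i, contractMap f x ∈ es' i) (hjy : ∃ j, contractMap f y ∈ es' j) :
    ∃ x' y', x' ≠ y' ∧ (∃ i, x' ∈ es' i) ∧ (∃ j, y' ∈ es' j) ∧
      ({x', y'} : Finset (Option {v : α // v ∉ f})) ∈ contractEdges E f := by
  have hnb := pair_not_subset hSp hf hbig hp
  exact ⟨_, _, contractMap_ne hxy hnb, hix, hjy,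
    pair_mem_contractEdges hp (pair_ne_of_card hbig)⟩

/-- auxiliary step for `l0cyc_contract`: the case where the new vertex `none` occurs
on the cycle, at position `0`. -/
lemma l0cyc_contract_aux {E : Finset (Finset α)} {f : Finset α} (hf : f ∈ E)
    (hSp : IsSperner E) (hbig : 3 ≤ f.card) (hL : L0cyc E) {t : ℕ}
    {v' : ZMod t → Option {v : α // v ∉ f}} {es' : ZMod t → Finset (Option {v : α // v ∉ f})}
    (hc : IsCycle (contractEdges E f) t v' es') (hv0 : v' 0 = none) :
    ∃ x' y', x' ≠ y' ∧ (∃ i, x' ∈ es' i) ∧ (∃ j, y' ∈ es' j) ∧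
      ({x', y'} : Finset (Option {v : α // v ∉ f})) ∈ contractEdges E f := by
  obtain ⟨ht, hvinj, hesinj, hmem, hcond⟩ := hc
  haveI : NeZero t := ⟨by omega⟩
  obtain ⟨z₀, hz₀⟩ : f.Nonempty := Finset.card_pos.1 (by omega)
  -- preimages of the cycle edges
  have hpre : ∀ i, ∃ gg, gg ∈ E.erase f ∧ gg.image (contractMap f) = es' i := by
    intro i
    obtain ⟨gg, hg, hgi⟩ := Finset.mem_image.1 (hmem i)
    exact ⟨gg, hg, hgi⟩
  choose g hgE hgim using hpre
  have hginj : Function.Injective g := fun a b hab => hesinj (by rw [← hgim a, ← hgim b, hab])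
  have hgmemE : ∀ i, g i ∈ E := fun i => Finset.mem_of_mem_erase (hgE i)
  have hgnef : ∀ i, g i ≠ f := fun i => (Finset.mem_erase.1 (hgE i)).1
  have hloc : ∀ (a : α) (i : ZMod t), a ∈ g i → contractMap f a ∈ es' i := by
    intro a i ha
    rw [← hgim i]
    exact Finset.mem_image_of_mem _ ha
  -- the lifted vertices away from position 0
  set x : ZMod t → α := fun i => ((v' i).map Subtype.val).getD z₀ with hxdef
  have hxprop : ∀ i : ZMod t, i ≠ 0 → x i ∉ f ∧ contractMap f (x i) = v' i := by
    intro i hi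
    rcases hvi : v' i with _ | w
    · exact absurd (hvinj (hvi.trans hv0.symm)) hi
    · have hxi : x i = w.1 := by
        simp only [hxdef, hvi, Option.map_some, Option.getD_some]
      rw [hxi]
      exact ⟨w.2, contractMap_eq_some w.2⟩

  have hvg : ∀ i j : ZMod t, i ≠ 0 → v' i ∈ es' j → x i ∈ g j := by
    intro i j hi hmemj
    rw [← hgim j, ← (hxprop i hi).2, contractMap_eq_some (hxprop i hi).1] at hmemj
    exact some_mem_image_contractMap.1 hmemj
  have hxinj : ∀ i j : ZMod t, i ≠ 0 → j ≠ 0 → x i = x j → i = j := by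
    intro i j hi hj hxij
    apply hvinj
    rw [← (hxprop i hi).2, ← (hxprop j hj).2, hxij]
  -- none is on the edges es' 0 and es' τ
  have h0 : (none : Option {v : α // v ∉ f}) ∈ es' 0 := hv0 ▸ (hcond 0).1
  set τ : ZMod t := ((t - 1 : ℕ) : ZMod t) with hτdef
  have hτ1 : τ + 1 = 0 := by
    have h1 : ((t - 1 : ℕ) : ZMod t) + 1 = ((t - 1 + 1 : ℕ) : ZMod t) := by push_cast; ring
    rw [hτdef, h1, Nat.sub_add_cancel (by omega), ZMod.natCast_self]
  have hτ : (none : Option {v : α // v ∉ f}) ∈ es' τ := by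
    have := (hcond τ).2
    rwa [hτ1, hv0] at this
  have hτne : τ ≠ 0 := by
    intro h
    haveI : Fact (1 < t) := ⟨by omega⟩
    have h10 : (1 : ZMod t) = 0 := by rw [← hτ1, h, zero_add]
    exact one_ne_zero h10
  obtain ⟨a₀, ha₀g, ha₀f⟩ : ∃ u ∈ g 0, u ∈ f := none_mem_image_contractMap.1 ((hgim 0) ▸ h0)
  obtain ⟨aτ, haτg, haτf⟩ : ∃ u ∈ g τ, u ∈ f := none_mem_image_contractMap.1 ((hgim τ) ▸ hτ)
  by_cases heq : a₀ = aτ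
  · -- replace `none` by the common vertex a₀
    set x' : ZMod t → α := fun i => if i = 0 then a₀ else x i with hx'def
    have hcyc : IsCycle E t x' g := by
      refine ⟨ht, ?_, hginj, hgmemE, ?_⟩
      · intro a b hab
        by_cases ha : a = 0 <;> by_cases hb : b = 0
        · rw [ha, hb]
        · rw [hx'def] at hab
          simp only [if_pos ha, if_neg hb] at hab
          exact absurd ((hxprop b hb).1) (fun hh => hh (hab ▸ ha₀f))
        · rw [hx'def] at hab
          simp only [if_neg ha, if_pos hb] at hab
          exact absurd ((hxprop a ha).1) (fun hh => hh (hab.symm ▸ ha₀f))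
        · rw [hx'def] at hab
          simp only [if_neg ha, if_neg hb] at hab
          exact hxinj a b ha hb hab
      · intro i
        constructor
        · by_cases hi : i = 0
          · rw [hx'def]
            simp only [hi, if_pos rfl]
            exact hi ▸ ha₀g
          · rw [hx'def]
            simp only [if_neg hi]
            exact hvg i i hi (hcond i).1
        · by_cases hi1 : i + 1 = 0
          · have hiτ : i = τ := by
              apply add_right_cancel (b := (1 : ZMod t))
              rw [hi1, hτ1]
            rw [hx'def]
            simp only [hi1, if_pos rfl]
            rw [heq, hiτ]
            exact haτg
          · rw [hx'def]
            simp only [if_neg hi1]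
            exact hvg (i + 1) i hi1 (hcond i).2
    obtain ⟨a, b, hab, ⟨i, hai⟩, ⟨j, hbj⟩, hpE⟩ := hL t x' g hcyc
    exact contract_pair_conclude hSp hf hbig hab hpE ⟨i, hloc a i hai⟩ ⟨j, hloc b j hbj⟩
  · -- insert the edge f into the cycle
    haveI : NeZero (t + 1) := ⟨by omega⟩
    have hrep : ∀ i : ZMod (t + 1), i = ((i.val : ℕ) : ZMod (t + 1)) :=
      fun i => (ZMod.natCast_rightInverse i).symm
    have hvlt : ∀ i : ZMod (t + 1), i.val < t + 1 := fun i => ZMod.val_lt i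
    have hcastne : ∀ n : ℕ, 1 ≤ n → n < t → ((n : ZMod t) ≠ 0) := by
      intro n h1 h2 hcon
      have := ZMod.val_cast_of_lt h2
      rw [hcon, ZMod.val_zero] at this
      omega
    set vh : ZMod (t + 1) → α := fun i =>
      if i.val = 0 then aτ else if i.val = 1 then a₀ else x (((i.val - 1 : ℕ) : ZMod t)) with hvhdef
    set eh : ZMod (t + 1) → Finset α := fun i =>
      if i.val = 0 then f else g (((i.val - 1 : ℕ) : ZMod t)) with hehdef
    have hvh0 : vh 0 = aτ := by rw [hvhdef]; simp
    have hcyc : IsCycle E (t + 1) vh eh := by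
      refine ⟨by omega, ?_, ?_, ?_, ?_⟩
      · -- injectivity of vh
        intro a b hab
        rw [hvhdef] at hab
        simp only at hab
        rcases Nat.lt_or_ge a.val 2 with ha2 | ha2 <;> rcases Nat.lt_or_ge b.val 2 with hb2 | hb2
        · -- both small
          by_cases ha0 : a.val = 0 <;> by_cases hb0 : b.val = 0
          · rw [hrep a, hrep b, ha0, hb0]
          · rw [if_pos ha0, if_neg hb0, if_pos (by omega)] at hab
            exact absurd hab.symm heq
          · rw [if_neg ha0, if_pos (by omega), if_pos hb0] at hab
            exact absurd hab heq
          · rw [if_neg ha0, if_pos (by omega), if_neg hb0, if_pos (by omega)] at hab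
            rw [hrep a, hrep b, (by omega : a.val = 1), (by omega : b.val = 1)]
        · exfalso
          have hbn : ¬ b.val = 0 := by omega
          have hbn1 : ¬ b.val = 1 := by omega
          rw [if_neg hbn, if_neg hbn1] at hab
          have hbx := (hxprop _ (hcastne (b.val - 1) (by omega) (by have := hvlt b; omega))).1
          rcases Nat.lt_or_ge a.val 1 with h | h
          · rw [if_pos (by omega)] at hab
            exact hbx (hab ▸ haτf)
          · rw [if_neg (by omega), if_pos (by omega)] at hab
            exact hbx (hab ▸ ha₀f)
        · exfalso
          have han : ¬ a.val = 0 := by omega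
          have han1 : ¬ a.val = 1 := by omega
          rw [if_neg han, if_neg han1] at hab
          have hax := (hxprop _ (hcastne (a.val - 1) (by omega) (by have := hvlt a; omega))).1
          rcases Nat.lt_or_ge b.val 1 with h | h
          · rw [if_pos (by omega)] at hab
            exact hax (hab.symm ▸ haτf)
          · rw [if_neg (by omega), if_pos (by omega)] at hab
            exact hax (hab.symm ▸ ha₀f)
        · rw [if_neg (by omega), if_neg (by omega), if_neg (by omega), if_neg (by omega)] at hab
          have hia := hcastne (a.val - 1) (by omega) (by have := hvlt a; omega)
          have hib := hcastne (b.val - 1) (by omega) (by have := hvlt b; omega)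
          have := hxinj _ _ hia hib hab
          have hveq : a.val - 1 = b.val - 1 := by
            have h1 := ZMod.val_cast_of_lt (show a.val - 1 < t by have := hvlt a; omega)
            have h2 := ZMod.val_cast_of_lt (show b.val - 1 < t by have := hvlt b; omega)
            rw [← h1, ← h2, this]
          have hveq2 : a.val = b.val := by omega
          rw [hrep a, hrep b, hveq2]
      · -- injectivity of eh
        intro a b hab
        rw [hehdef] at hab
        simp only at hab
        by_cases ha : a.val = 0 <;> by_cases hb : b.val = 0
        · rw [hrep a, hrep b, ha, hb]
        · rw [if_pos ha, if_neg hb] at hab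
          exact absurd hab.symm (hgnef _)
        · rw [if_neg ha, if_pos hb] at hab
          exact absurd hab (hgnef _)
        · rw [if_neg ha, if_neg hb] at hab
          have := hginj hab
          have hveq : a.val - 1 = b.val - 1 := by
            have h1 := ZMod.val_cast_of_lt (show a.val - 1 < t by have := hvlt a; omega)
            have h2 := ZMod.val_cast_of_lt (show b.val - 1 < t by have := hvlt b; omega)
            rw [← h1, ← h2, this]
          have hveq2 : a.val = b.val := by omega
          rw [hrep a, hrep b, hveq2]
      · intro i
        rw [hehdef]
        simp only
        by_cases hi : i.val = 0
        · rw [if_pos hi]; exact hf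
        · rw [if_neg hi]; exact hgmemE _
      · intro i
        have hip : i + 1 = (((i.val + 1 : ℕ)) : ZMod (t + 1)) := by
          conv_lhs => rw [hrep i]
          push_cast
          ring
        constructor
        · -- vh i ∈ eh i
          rw [hvhdef, hehdef]
          simp only
          by_cases hi0 : i.val = 0
          · rw [if_pos hi0, if_pos hi0]; exact haτf
          · rw [if_neg hi0, if_neg hi0]
            by_cases hi1 : i.val = 1
            · rw [if_pos hi1, hi1]
              simpa using ha₀g
            · rw [if_neg hi1]
              exact hvg _ _ (hcastne (i.val - 1) (by omega) (by have := hvlt i; omega))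
                (hcond _).1
        · -- vh (i+1) ∈ eh i
          rw [hvhdef, hehdef]
          simp only
          by_cases hi0 : i.val = 0
          · rw [if_pos hi0]
            have : (i + 1).val = 1 := by
              rw [hip, hi0, ZMod.val_cast_of_lt (by omega)]
            rw [if_neg (by omega), if_pos this]
            exact ha₀f
          · rw [if_neg hi0]
            by_cases hit : i.val = t
            · have : i + 1 = 0 := by
                rw [hip, hit, ZMod.natCast_self]
              rw [this]
              have h0val : (0 : ZMod (t+1)).val = 0 := ZMod.val_zero
              rw [if_pos h0val, hit]
              exact haτg
            · have hlt : i.val + 1 < t + 1 := by have := hvlt i; omega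
              have hval1 : (i + 1).val = i.val + 1 := by
                rw [hip, ZMod.val_cast_of_lt hlt]
              rw [if_neg (by omega), if_neg (by omega)]
              have harg : ((i + 1).val - 1 : ℕ) = i.val := by omega
              rw [harg]
              have hcast : ((i.val : ℕ) : ZMod t) = ((i.val - 1 : ℕ) : ZMod t) + 1 := by
                have h' : (i.val - 1) + 1 = i.val := by omega
                conv_lhs => rw [← h']
                push_cast
                ring
              rw [hcast]
              exact hvg _ _ (by
                rw [← hcast]
                exact hcastne i.val (by omega) (by omega))
                (hcond _).2
    obtain ⟨a, b, hab, ⟨i, hai⟩, ⟨j, hbj⟩, hpE⟩ := hL (t + 1) vh eh hcyc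
    have hlocate : ∀ (a : α) (i : ZMod (t + 1)), a ∈ eh i →
        ∃ j, contractMap f a ∈ es' j := by
      intro a i hai
      rw [hehdef] at hai
      simp only at hai
      by_cases h : i.val = 0
      · rw [if_pos h] at hai
        exact ⟨0, by rw [contractMap_eq_none hai]; exact h0⟩
      · rw [if_neg h] at hai
        exact ⟨_, hloc a _ hai⟩
    exact contract_pair_conclude hSp hf hbig hab hpE (hlocate a i hai) (hlocate b j hbj)

/-- The cycle condition passes to the contraction of a large edge. -/
lemma l0cyc_contract {E : Finset (Finset α)} {f : Finset α} (hf : f ∈ E)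
    (hSp : IsSperner E) (hbig : 3 ≤ f.card) (hL : L0cyc E) :
    L0cyc (contractEdges E f) := by
  intro t v' es' hc
  by_cases hnone : ∃ i₀, v' i₀ = none
  · obtain ⟨i₀, hi₀⟩ := hnone
    have hrot := isCycle_rotate hc i₀
    have hrot0 : (fun i => v' (i + i₀)) 0 = none := by simpa using hi₀
    obtain ⟨x', y', hxy, ⟨i, hi⟩, ⟨j, hj⟩, hp⟩ :=
      l0cyc_contract_aux hf hSp hbig hL hrot hrot0
    exact ⟨x', y', hxy, ⟨i + i₀, hi⟩, ⟨j + i₀, hj⟩, hp⟩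
  · -- no `none` on the cycle: direct lift
    obtain ⟨ht, hvinj, hesinj, hmem, hcond⟩ := hc
    push_neg at hnone
    have hpre : ∀ i, ∃ gg, gg ∈ E.erase f ∧ gg.image (contractMap f) = es' i := by
      intro i
      obtain ⟨gg, hg, hgi⟩ := Finset.mem_image.1 (hmem i)
      exact ⟨gg, hg, hgi⟩
    choose g hgE hgim using hpre
    have hginj : Function.Injective g := fun a b hab => hesinj (by rw [← hgim a, ← hgim b, hab])
    have hgmemE : ∀ i, g i ∈ E := fun i => Finset.mem_of_mem_erase (hgE i)
    have hloc : ∀ (a : α) (i : ZMod t), a ∈ g i → contractMap f a ∈ es' i := by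
      intro a i ha
      rw [← hgim i]
      exact Finset.mem_image_of_mem _ ha
    have hx : ∀ i : ZMod t, ∃ (a : α) (ha : a ∉ f), v' i = some ⟨a, ha⟩ := by
      intro i
      rcases hvi : v' i with _ | w
      · exact absurd hvi (hnone i)
      · exact ⟨w.1, w.2, rfl⟩
    choose x hxf hvx using hx
    have hvg : ∀ i j : ZMod t, v' i ∈ es' j → x i ∈ g j := by
      intro i j hmemj
      rw [← hgim j, hvx i] at hmemj
      exact some_mem_image_contractMap.1 hmemj
    have hcyc : IsCycle E t x g := by
      refine ⟨ht, ?_, hginj, hgmemE, fun i => ⟨hvg i i (hcond i).1, hvg (i+1) i (hcond i).2⟩⟩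
      intro a b hab
      apply hvinj
      rw [hvx a, hvx b]
      simp only [Option.some.injEq]
      exact Subtype.ext hab
    obtain ⟨a, b, hab, ⟨i, hai⟩, ⟨j, hbj⟩, hpE⟩ := hL t x g hcyc
    exact contract_pair_conclude hSp hf hbig hab hpE ⟨i, hloc a i hai⟩ ⟨j, hloc b j hbj⟩

end Lift
section Cards

variable {α : Type} [DecidableEq α]

lemma contractMap_injOn {f : Finset α} {a b : α} (ha : a ∉ f) (hb : b ∉ f)
    (h : contractMap f a = contractMap f b) : a = b := by
  rw [contractMap_eq_some ha, contractMap_eq_some hb] at h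
  exact congrArg (fun o => (Option.map Subtype.val o).getD a) h

lemma card_image_contract {f e' : Finset α} :
    (e'.image (contractMap f)).card =
      (e' \ f).card + (if (e' ∩ f).Nonempty then 1 else 0) := by
  have hsplit : e' = (e' \ f) ∪ (e' ∩ f) := (Finset.sdiff_union_inter e' f).symm
  have hinj : ((e' \ f).image (contractMap f)).card = (e' \ f).card :=
    Finset.card_image_of_injOn (fun a ha b hb hab =>
      contractMap_injOn (Finset.mem_sdiff.1 ha).2 (Finset.mem_sdiff.1 hb).2 hab)
  conv_lhs => rw [hsplit]
  rw [Finset.image_union]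
  rcases (e' ∩ f).eq_empty_or_nonempty with hem | hne
  · rw [hem, if_neg (by simp)]
    simp only [Finset.image_empty, Finset.union_empty, add_zero]
    exact hinj
  · have him2 : (e' ∩ f).image (contractMap f) = {none} := by
      ext o
      simp only [Finset.mem_image, Finset.mem_singleton]
      constructor
      · rintro ⟨a, ha, rfl⟩
        exact contractMap_eq_none (Finset.mem_inter.1 ha).2
      · rintro rfl
        obtain ⟨a, ha⟩ := hne
        exact ⟨a, ha, contractMap_eq_none (Finset.mem_inter.1 ha).2⟩
    rw [him2, if_pos hne]
    rw [Finset.card_union_of_disjoint, hinj, Finset.card_singleton]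
    rw [Finset.disjoint_singleton_right, Finset.mem_image]
    rintro ⟨a, ha, hcm⟩
    rw [contractMap_eq_some (Finset.mem_sdiff.1 ha).2] at hcm
    exact nomatch hcm

lemma not_subset_of_mem_erase {E : Finset (Finset α)} (hSp : IsSperner E) {f e' : Finset α}
    (hf : f ∈ E) (he' : e' ∈ E.erase f) : ¬ e' ⊆ f := by
  intro hsub
  exact (Finset.mem_erase.1 he').1 (hSp e' (Finset.mem_of_mem_erase he') f hf hsub)

/-- The minimal edges of the contraction of a large edge all have even cardinality `≥ 2`. -/
lemma minimal_contract_even {E : Finset (Finset α)} {f : Finset α} (hf : f ∈ E)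
    (hSp : IsSperner E) (hbig : 3 ≤ f.card) (hL : L0cyc E)
    (heven : ∀ e ∈ E, Even e.card) (hcard2 : ∀ e ∈ E, 2 ≤ e.card) :
    ∀ m ∈ minimalEdges (contractEdges E f), Even m.card ∧ 2 ≤ m.card := by
  intro m hm
  obtain ⟨hmC, hmin⟩ := Finset.mem_filter.1 hm
  obtain ⟨e', he', rfl⟩ := Finset.mem_image.1 hmC
  have he'E : e' ∈ E := Finset.mem_of_mem_erase he'
  have hnsub : ¬ e' ⊆ f := not_subset_of_mem_erase hSp hf he'
  have hsd : (e' \ f).Nonempty := by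
    rw [Finset.sdiff_nonempty]
    exact hnsub
  have hcards := @card_image_contract α _ f e'
  have hsdcard : (e' \ f).card + (e' ∩ f).card = e'.card := by
    rw [Finset.card_sdiff_add_card_inter]
  rcases (e' ∩ f).eq_empty_or_nonempty with hem | hne
  · rw [hem] at hcards hsdcard
    simp only [Finset.not_nonempty_empty, if_false, add_zero, Finset.card_empty] at hcards hsdcard
    rw [hcards, hsdcard]
    exact ⟨heven e' he'E, hcard2 e' he'E⟩
  · rw [if_pos hne] at hcards
    by_cases hodd : Even (e' ∩ f).card
    · -- even intersection `≥ 2`: contradiction with minimality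
      exfalso
      have hint2 : 2 ≤ (e' ∩ f).card := by
        have h1 : (e' ∩ f).card ≠ 0 := by
          intro h
          rw [Finset.card_eq_zero.1 h] at hne
          exact Finset.not_nonempty_empty hne
        rcases hodd with ⟨c, hc⟩
        omega
      obtain ⟨u, hu, v, hv, huv⟩ := Finset.one_lt_card.1 (by omega : 1 < (e' ∩ f).card)
      have hu' := Finset.mem_inter.1 hu
      have hv' := Finset.mem_inter.1 hv
      have hcyc := isCycle_two (E := E) he'E hf (Finset.mem_erase.1 he').1 huv
        hu'.1 hu'.2 hv'.1 hv'.2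
      obtain ⟨a, b, hab, ⟨i, hai⟩, ⟨j, hbj⟩, hpE⟩ := hL 2 _ _ hcyc
      -- a, b each lie in e' ∪ f
      have hmem2 : ∀ (c : α) (i : ZMod 2), c ∈ (fun i : ZMod 2 =>
          if i = 0 then e' else f) i → c ∈ e' ∨ c ∈ f := by
        intro c i hc
        change c ∈ if i = 0 then e' else f at hc
        by_cases h : i = 0
        · rw [if_pos h] at hc; exact Or.inl hc
        · rw [if_neg h] at hc; exact Or.inr hc
      have hae := hmem2 a i hai
      have hbe := hmem2 b j hbj
      have hnbf := pair_not_subset hSp hf hbig hpE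
      have hsd1 : 1 ≤ (e' \ f).card := Finset.card_pos.2 hsd
      have he'3 : 3 ≤ e'.card := by omega
      have hnbe : ¬(a ∈ e' ∧ b ∈ e') := pair_not_subset hSp he'E he'3 hpE
      -- normalize so that a ∈ e' \ f, b ∈ f
      have hkey : ∃ a' b', ({a', b'} : Finset α) = ({a, b} : Finset α) ∧
          a' ∈ e' ∧ a' ∉ f ∧ b' ∈ f := by
        rcases hae with ha | ha <;> rcases hbe with hb | hb
        · exact absurd ⟨ha, hb⟩ hnbe
        · exact ⟨a, b, rfl, ha, fun haf => hnbf ⟨haf, hb⟩, hb⟩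
        · exact ⟨b, a, Finset.pair_comm b a, hb, fun hbf => hnbf ⟨ha, hbf⟩, ha⟩
        · exact absurd ⟨ha, hb⟩ hnbf
      obtain ⟨a', b', hpair, ha'e, ha'f, hb'f⟩ := hkey
      have hpE' : ({a', b'} : Finset α) ∈ E := hpair ▸ hpE
      have ha'b' : a' ≠ b' := fun h => ha'f (h ▸ hb'f)
      have hcmne : contractMap f a' ≠ contractMap f b' :=
        contractMap_ne ha'b' (fun h => ha'f h.1)
      have hq : ({contractMap f a', contractMap f b'} :
          Finset (Option {v : α // v ∉ f})) ∈ contractEdges E f :=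
        pair_mem_contractEdges hpE' (pair_ne_of_card hbig)
      have hq2 : ({contractMap f a', contractMap f b'} :
          Finset (Option {v : α // v ∉ f})).card = 2 := Finset.card_pair hcmne
      have hsub : ({contractMap f a', contractMap f b'} :
          Finset (Option {v : α // v ∉ f})) ⊆ e'.image (contractMap f) := by
        intro o ho
        rcases Finset.mem_insert.1 ho with rfl | ho
        · exact Finset.mem_image_of_mem _ ha'e
        · rw [Finset.mem_singleton.1 ho, contractMap_eq_none hb'f]
          exact none_mem_image_contractMap.2 ⟨u, hu'.1, hu'.2⟩
      have hbig' : 3 ≤ (e'.image (contractMap f)).card := by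
        rw [hcards]
        rcases heven e' he'E with ⟨c, hc⟩
        rcases hodd with ⟨d, hd⟩
        have hsd1 : 1 ≤ (e' \ f).card := Finset.card_pos.2 hsd
        omega
      have := hmin _ hq hsub
      rw [← this, hq2] at hbig'
      omega
    · -- odd intersection: image has even cardinality
      constructor
      · rw [hcards]
        rcases heven e' he'E with ⟨c, hc⟩
        have h1 : 1 ≤ (e' ∩ f).card := Finset.card_pos.2 hne
        have h2 : (e' ∩ f).card % 2 = 1 := Nat.odd_iff.1 (Nat.not_even_iff_odd.1 hodd)
        have h3 : 1 ≤ (e' \ f).card := Finset.card_pos.2 hsd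
        rcases Nat.even_or_odd ((e' \ f).card + 1) with h | h
        · exact h
        · exfalso
          rw [Nat.odd_iff] at h
          omega
      · have h3 : 1 ≤ (e' \ f).card := Finset.card_pos.2 hsd
        omega

end Cards
section Conn

variable {α : Type} [DecidableEq α]

lemma pair_eq_cases {a b x y : α} (hab : a ≠ b) (h : ({a, b} : Finset α) = {x, y}) :
    (a = x ∧ b = y) ∨ (a = y ∧ b = x) := by
  have haxy : a = x ∨ a = y := by
    have : a ∈ ({x, y} : Finset α) := h ▸ Finset.mem_insert_self a {b}
    simpa using this
  have hbxy : b = x ∨ b = y := by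
    have : b ∈ ({x, y} : Finset α) := h ▸ Finset.mem_insert.2 (Or.inr (Finset.mem_singleton_self b))
    simpa using this
  have hxab : x = a ∨ x = b := by
    have : x ∈ ({a, b} : Finset α) := h ▸ Finset.mem_insert_self x {y}
    simpa using this
  rcases haxy with rfl | rfl
  · rcases hbxy with rfl | rfl
    · exact absurd rfl hab
    · exact Or.inl ⟨rfl, rfl⟩
  · rcases hbxy with rfl | rfl
    · exact Or.inr ⟨rfl, rfl⟩
    · rcases hxab with rfl | rfl
      · exact Or.inl ⟨rfl, rfl⟩
      · exact absurd rfl hab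

lemma sym2_eq_iff_pair_eq {a b x y : α} (hab : a ≠ b) :
    s(a, b) = s(x, y) ↔ ({a, b} : Finset α) = {x, y} := by
  rw [Sym2.eq_iff]
  constructor
  · rintro (⟨rfl, rfl⟩ | ⟨rfl, rfl⟩)
    · rfl
    · exact Finset.pair_comm a b
  · intro h
    rcases pair_eq_cases hab h with ⟨rfl, rfl⟩ | ⟨rfl, rfl⟩
    · exact Or.inl ⟨rfl, rfl⟩
    · exact Or.inr ⟨rfl, rfl⟩

lemma pairGraph_sdiff_eq {E : Finset (Finset α)} {x y : α} (hxy : x ≠ y) :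
    pairGraph (E.erase {x, y})
      = (pairGraph E) \ SimpleGraph.fromEdgeSet {s(x, y)} := by
  ext a b
  simp only [pairGraph, SimpleGraph.sdiff_adj, SimpleGraph.fromEdgeSet_adj,
    Set.mem_singleton_iff, Finset.mem_erase]
  constructor
  · rintro ⟨hab, hne, hmem⟩
    refine ⟨⟨hab, hmem⟩, ?_⟩
    rintro ⟨hs, -⟩
    exact hne ((sym2_eq_iff_pair_eq hab).1 hs)
  · rintro ⟨⟨hab, hmem⟩, hns⟩
    refine ⟨hab, ?_, hmem⟩
    intro hpe
    exact hns ⟨(sym2_eq_iff_pair_eq hab).2 hpe, hab⟩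

lemma reachable_map_step {β : Type} {G : SimpleGraph α} {G' : SimpleGraph β} (m : α → β)
    (hstep : ∀ a b : α, G.Adj a b → G'.Reachable (m a) (m b)) :
    ∀ u v : α, G.Reachable u v → G'.Reachable (m u) (m v) := by
  intro u v huv
  obtain ⟨w⟩ := huv
  induction w with
  | nil => exact SimpleGraph.Reachable.refl _
  | cons h _ ih => exact (hstep _ _ h).trans ih

lemma reachable_of_walk_step {G G' : SimpleGraph α}
    (hstep : ∀ a b : α, G.Adj a b → G'.Reachable a b) :
    ∀ u v : α, G.Reachable u v → G'.Reachable u v :=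
  reachable_map_step (fun x => x) hstep

/-- If the two endpoints of a deleted `2`-edge are still reachable, deletion preserves
connectivity. -/
lemma pairGraph_erase_connected {E : Finset (Finset α)} {x y : α}
    (hconn : (pairGraph E).Connected) (hxy : x ≠ y)
    (hreach : (pairGraph (E.erase {x, y})).Reachable x y) :
    (pairGraph (E.erase {x, y})).Connected := by
  have hstep : ∀ a b : α, (pairGraph E).Adj a b →
      (pairGraph (E.erase {x, y})).Reachable a b := by
    rintro a b ⟨hab, hmem⟩
    by_cases hef : ({a, b} : Finset α) = {x, y}
    · rcases pair_eq_cases hab hef with ⟨rfl, rfl⟩ | ⟨rfl, rfl⟩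
      · exact hreach
      · exact hreach.symm
    · exact SimpleGraph.Adj.reachable ⟨hab, Finset.mem_erase.2 ⟨hef, hmem⟩⟩
  haveI : Nonempty α := hconn.nonempty
  exact SimpleGraph.Connected.mk
    (fun u v => reachable_of_walk_step hstep u v (hconn.preconnected u v))

/-- Contraction preserves connectivity of the graph of `2`-edges. -/
lemma pairGraph_contract_connected {E : Finset (Finset α)} {f : Finset α} (hf : f ∈ E)
    (hfne : f.Nonempty)
    (hconn : (pairGraph (E.filter fun e => e.card = 2)).Connected) :
    (pairGraph ((contractEdges E f).filter fun e => e.card = 2)).Connected := by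
  obtain ⟨z₀, hz₀⟩ := hfne
  have hstep : ∀ a b : α, (pairGraph (E.filter fun e => e.card = 2)).Adj a b →
      (pairGraph ((contractEdges E f).filter fun e => e.card = 2)).Reachable
        (contractMap f a) (contractMap f b) := by
    rintro a b ⟨hab, hmem⟩
    obtain ⟨hmemE, hcard⟩ := Finset.mem_filter.1 hmem
    by_cases ha : a ∈ f <;> by_cases hb : b ∈ f
    · rw [contractMap_eq_none ha, contractMap_eq_none hb]
    · have hne : ({a, b} : Finset α) ≠ f := fun h => hb (h ▸ Finset.mem_insert.2
        (Or.inr (Finset.mem_singleton_self b)))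
      have hcm := contractMap_ne hab (fun h => hb h.2)
      exact SimpleGraph.Adj.reachable ⟨hcm, Finset.mem_filter.2
        ⟨pair_mem_contractEdges hmemE hne, Finset.card_pair hcm⟩⟩
    · have hne : ({a, b} : Finset α) ≠ f := fun h => ha (h ▸ Finset.mem_insert_self a {b})
      have hcm := contractMap_ne hab (fun h => ha h.1)
      exact SimpleGraph.Adj.reachable ⟨hcm, Finset.mem_filter.2
        ⟨pair_mem_contractEdges hmemE hne, Finset.card_pair hcm⟩⟩
    · have hne : ({a, b} : Finset α) ≠ f := fun h => ha (h ▸ Finset.mem_insert_self a {b})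
      have hcm := contractMap_ne hab (fun h => ha h.1)
      exact SimpleGraph.Adj.reachable ⟨hcm, Finset.mem_filter.2
        ⟨pair_mem_contractEdges hmemE hne, Finset.card_pair hcm⟩⟩
  have hsurj : ∀ a : Option {v : α // v ∉ f}, ∃ u : α, contractMap f u = a := by
    rintro (_ | w)
    · exact ⟨z₀, contractMap_eq_none hz₀⟩
    · exact ⟨w.1, contractMap_eq_some w.2⟩
  constructor
  intro a b
  obtain ⟨u, rfl⟩ := hsurj a
  obtain ⟨v, rfl⟩ := hsurj b
  exact reachable_map_step (contractMap f) hstep u v (hconn.preconnected u v)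

lemma minimalEdges_filter_two_eq {E : Finset (Finset α)} (h2 : ∀ e ∈ E, 2 ≤ e.card) :
    ((minimalEdges E).filter fun e => e.card = 2) = E.filter fun e => e.card = 2 := by
  ext e
  constructor
  · intro he
    obtain ⟨hem, hc⟩ := Finset.mem_filter.1 he
    exact Finset.mem_filter.2 ⟨(Finset.mem_filter.1 hem).1, hc⟩
  · intro he
    obtain ⟨heE, hc⟩ := Finset.mem_filter.1 he
    refine Finset.mem_filter.2 ⟨Finset.mem_filter.2 ⟨heE, ?_⟩, hc⟩
    intro e' he' hsub
    exact Finset.eq_of_subset_of_card_le hsub (by rw [hc]; exact h2 e' he')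

lemma erase_filter_two_eq {E : Finset (Finset α)} {f : Finset α} (hbig : f.card ≠ 2) :
    ((E.erase f).filter fun e => e.card = 2) = E.filter fun e => e.card = 2 := by
  ext e
  simp only [Finset.mem_filter, Finset.mem_erase]
  constructor
  · rintro ⟨⟨-, he⟩, hc⟩
    exact ⟨he, hc⟩
  · rintro ⟨he, hc⟩
    exact ⟨⟨fun h => hbig (h ▸ hc), he⟩, hc⟩

lemma card_eq_one_of_pairGraph_empty {α : Type} [Fintype α] [DecidableEq α]
    {E : Finset (Finset α)}
    (hconn : (pairGraph (E.filter fun e => e.card = 2)).Connected)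
    (hempty : E.filter (fun e => e.card = 2) = ∅) : Fintype.card α = 1 := by
  haveI : Nonempty α := hconn.nonempty
  have hsub : ∀ u v : α, u = v := by
    intro u v
    have hstep : ∀ a b : α, (pairGraph (E.filter fun e => e.card = 2)).Adj a b →
        (⊥ : SimpleGraph α).Reachable a b := by
      rintro a b ⟨hab, hmem⟩
      rw [hempty] at hmem
      exact absurd hmem (Finset.notMem_empty _)
    have := reachable_of_walk_step hstep u v (hconn.preconnected u v)
    exact SimpleGraph.reachable_bot.1 this
  obtain ⟨u⟩ := (inferInstance : Nonempty α)
  exact Fintype.card_eq_one_iff.2 ⟨u, fun v => hsub v u⟩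

end Conn
section Leaf

variable {α : Type} [Fintype α] [DecidableEq α]

instance pairGraph_decAdj (E : Finset (Finset α)) : DecidableRel (pairGraph E).Adj :=
  fun _ _ => instDecidableAnd

lemma exists_leaf {E : Finset (Finset α)} (hconn : (pairGraph E).Connected)
    (hall2 : ∀ e ∈ E, e.card = 2) (hEne : E.Nonempty)
    (hallbridge : ∀ f ∈ E, ¬ (pairGraph (E.erase f)).Connected) :
    ∃ z w : α, z ≠ w ∧ ({z, w} : Finset α) ∈ E ∧
      ∀ e ∈ E, z ∈ e → e = ({z, w} : Finset α) := by
  -- the graph is nontrivial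
  obtain ⟨e₀, he₀⟩ := hEne
  obtain ⟨a, b, hab, he₀ab⟩ := Finset.card_eq_two.1 (hall2 e₀ he₀)
  haveI : Nontrivial α := ⟨a, b, hab⟩
  -- every edge is a bridge, so the graph is acyclic, hence a tree
  have hacyclic : (pairGraph E).IsAcyclic := by
    rw [SimpleGraph.isAcyclic_iff_forall_adj_isBridge]
    intro v w hadj
    obtain ⟨hvw, hmem⟩ := hadj
    rw [SimpleGraph.isBridge_iff]
    unfold SimpleGraph.deleteEdges
    intro hreach
    rw [← pairGraph_sdiff_eq hvw] at hreach
    exact hallbridge {v, w} hmem (pairGraph_erase_connected hconn hvw hreach)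
  have htree : (pairGraph E).IsTree := ⟨hconn, hacyclic⟩
  have hedges : (pairGraph E).edgeFinset.card + 1 = Fintype.card α :=
    htree.card_edgeFinset
  have hdegpos : ∀ v : α, 0 < (pairGraph E).degree v := by
    intro v
    rw [SimpleGraph.degree_pos_iff_exists_adj]
    obtain ⟨u, hu⟩ := exists_ne v
    obtain ⟨w⟩ := hconn.preconnected v u
    cases w with
    | nil => exact absurd rfl hu
    | cons h _ => exact ⟨_, h⟩
  -- some vertex has degree 1
  have hleaf : ∃ z : α, (pairGraph E).degree z = 1 := by
    by_contra hno
    push_neg at hno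
    have hge2 : ∀ v : α, 2 ≤ (pairGraph E).degree v := by
      intro v
      have h1 := hdegpos v
      have h2 := hno v
      omega
    have hsum := SimpleGraph.sum_degrees_eq_twice_card_edges (pairGraph E)
    have hsumge : 2 * Fintype.card α ≤ ∑ v : α, (pairGraph E).degree v := by
      calc 2 * Fintype.card α = ∑ _v : α, 2 := by
            rw [Finset.sum_const, Finset.card_univ, smul_eq_mul, mul_comm]
        _ ≤ ∑ v : α, (pairGraph E).degree v := Finset.sum_le_sum (fun v _ => hge2 v)
    rw [hsum] at hsumge
    have hcard2 : 2 ≤ Fintype.card α := Fintype.one_lt_card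
    omega
  obtain ⟨z, hz⟩ := hleaf
  obtain ⟨w, hw⟩ := Finset.card_eq_one.1 hz
  have hadj : (pairGraph E).Adj z w := by
    rw [← SimpleGraph.mem_neighborFinset, hw]
    exact Finset.mem_singleton_self w
  obtain ⟨hzw, hmem⟩ := hadj
  refine ⟨z, w, hzw, hmem, ?_⟩
  intro e he hze
  obtain ⟨x, y, hxy, hexy⟩ := Finset.card_eq_two.1 (hall2 e he)
  subst hexy
  rcases Finset.mem_insert.1 hze with rfl | hzy
  · -- z = x
    have hyadj : (pairGraph E).Adj z y := ⟨fun h => hxy h.symm.symm, by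
      exact he⟩
    have : y ∈ (pairGraph E).neighborFinset z := SimpleGraph.mem_neighborFinset _ _ _ |>.2 hyadj
    rw [hw, Finset.mem_singleton] at this
    rw [this]
  · -- z = y
    rw [Finset.mem_singleton] at hzy
    subst hzy
    have hxadj : (pairGraph E).Adj z x := ⟨fun h => hxy h.symm, by
      rw [Finset.pair_comm z x]; exact he⟩
    have : x ∈ (pairGraph E).neighborFinset z := SimpleGraph.mem_neighborFinset _ _ _ |>.2 hxadj
    rw [hw, Finset.mem_singleton] at this
    rw [this, Finset.pair_comm]

end Leaf
section MainAux

variable {α : Type} [DecidableEq α]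

lemma minimalEdges_sperner (E : Finset (Finset α)) : IsSperner (minimalEdges E) := by
  intro e₁ h₁ e₂ h₂ hsub
  exact (Finset.mem_filter.1 h₂).2 e₁ (Finset.mem_filter.1 h₁).1 hsub

lemma contract_card2 {E : Finset (Finset α)} {f : Finset α} (hf : f ∈ E) (hSp : IsSperner E)
    (hcard2 : ∀ e ∈ E, 2 ≤ e.card) : ∀ m ∈ contractEdges E f, 2 ≤ m.card := by
  intro m hm
  obtain ⟨e', he', rfl⟩ := Finset.mem_image.1 hm
  have hnsub := not_subset_of_mem_erase hSp hf he'
  have hsd : 1 ≤ (e' \ f).card := Finset.card_pos.2 (Finset.sdiff_nonempty.2 hnsub)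
  have hsdcard : (e' \ f).card + (e' ∩ f).card = e'.card := Finset.card_sdiff_add_card_inter e' f
  have h2 := hcard2 e' (Finset.mem_of_mem_erase he')
  rw [card_image_contract]
  rcases (e' ∩ f).eq_empty_or_nonempty with hem | hne
  · rw [hem, if_neg (by simp)]
    rw [hem, Finset.card_empty] at hsdcard
    omega
  · rw [if_pos hne]
    omega

lemma contract_all_pairs {E : Finset (Finset α)} (hall2 : ∀ e ∈ E, e.card = 2) {f : Finset α}
    (hf : f ∈ E) : ∀ m ∈ contractEdges E f, m.card = 2 := by
  intro m hm
  obtain ⟨e', he', rfl⟩ := Finset.mem_image.1 hm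
  obtain ⟨u, v, huv, rfl⟩ := Finset.card_eq_two.1 (hall2 e' (Finset.mem_of_mem_erase he'))
  have hnboth : ¬(u ∈ f ∧ v ∈ f) := by
    rintro ⟨hu, hv⟩
    apply (Finset.mem_erase.1 he').1
    apply Finset.eq_of_subset_of_card_le
    · intro a ha
      rcases Finset.mem_insert.1 ha with rfl | ha
      · exact hu
      · rw [Finset.mem_singleton.1 ha]; exact hv
    · rw [hall2 f hf, Finset.card_pair huv]
  rw [Finset.image_insert, Finset.image_singleton]
  exact Finset.card_pair (contractMap_ne huv hnboth)

lemma allpairs_sperner {E : Finset (Finset α)} (hall2 : ∀ e ∈ E, e.card = 2) : IsSperner E :=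
  fun e₁ h₁ e₂ h₂ hsub =>
    Finset.eq_of_subset_of_card_le hsub (by rw [hall2 e₁ h₁, hall2 e₂ h₂])

lemma card_option_compl {α : Type} [Fintype α] [DecidableEq α] (f : Finset α) :
    Fintype.card (Option {v : α // v ∉ f}) + f.card = Fintype.card α + 1 := by
  rw [Fintype.card_option, Fintype.card_subtype]
  have h1 : Finset.univ.filter (fun v : α => v ∉ f) = Finset.univ \ f :=
    (Finset.sdiff_eq_filter _ _).symm
  rw [h1, Finset.card_sdiff_of_subset (Finset.subset_univ f), Finset.card_univ]
  have h2 : f.card ≤ Fintype.card α := by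
    rw [← Finset.card_univ]
    exact Finset.card_le_card (Finset.subset_univ f)
  omega

lemma neg_one_pow_shift {n n' c : ℕ} (hc : Even c) (h2 : 2 ≤ c) (heq : n' + c = n + 1) :
    (-1 : ℝ) ^ (n + 1) = -(-1 : ℝ) ^ (n' + 1) := by
  obtain ⟨d, hd⟩ := hc
  have hsum : (n' + 1) + (c - 1) = n + 1 := by omega
  rw [← hsum, pow_add]
  have hodd : Odd (c - 1) := ⟨d - 1, by omega⟩
  rw [hodd.neg_one_pow]
  ring

lemma dc_sign_combine {n n' c : ℕ} (hc : Even c) (h2 : 2 ≤ c) (heq : n' + c = n + 1)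
    {A B : ℝ} (hA : 0 < (-1 : ℝ) ^ (n + 1) * A) (hB : 0 < (-1 : ℝ) ^ (n' + 1) * B) :
    0 < (-1 : ℝ) ^ (n + 1) * (A - B) := by
  have hkey := neg_one_pow_shift hc h2 heq
  have hexp : (-1 : ℝ) ^ (n + 1) * (A - B)
      = (-1 : ℝ) ^ (n + 1) * A + (-1 : ℝ) ^ (n' + 1) * B := by
    rw [hkey]; ring
  rw [hexp]
  linarith

end MainAux

section Main

lemma main_induction : ∀ (N : ℕ) (α : Type) [Fintype α] [DecidableEq α]
    (E : Finset (Finset α)),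
    Fintype.card α + E.card ≤ N →
    (∀ e ∈ E, Even e.card ∧ 2 ≤ e.card) → IsSperner E → L0cyc E →
    (pairGraph (E.filter fun e => e.card = 2)).Connected →
    ∀ p : Polynomial ℝ, (∀ k : ℕ, 0 < k → p.eval (k : ℝ) = countColorings E k) →
    ∀ lam : ℝ, 0 < lam → lam < 1 →
    0 < (-1 : ℝ) ^ (Fintype.card α + 1) * p.eval lam := by
  intro N
  induction N with
  | zero =>
    intro α _ _ E hN hdeg hSp hL hconn p hp lam hl0 hl1
    exfalso
    haveI : Nonempty α := hconn.nonempty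
    have := Fintype.card_pos (α := α)
    omega
  | succ N ih =>
    intro α instF instD E hN hdeg hSp hL hconn p hp lam hl0 hl1
    haveI : Nonempty α := hconn.nonempty
    have hnpos : 0 < Fintype.card α := Fintype.card_pos
    have hnef : ∀ e ∈ E, e.Nonempty := fun e he => Finset.card_pos.1 (by
      have := (hdeg e he).2; omega)
    have hcard2 : ∀ e ∈ E, 2 ≤ e.card := fun e he => (hdeg e he).2
    by_cases hbigex : ∃ f ∈ E, f.card ≠ 2
    · -- a big edge exists: deletion–contraction on it
      obtain ⟨f, hf, hf2⟩ := hbigex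
      have hbig3 : 3 ≤ f.card := by have := (hdeg f hf).2; omega
      have hfeven := (hdeg f hf).1
      have hE1 : 1 ≤ E.card := Finset.card_pos.2 ⟨f, hf⟩
      -- deletion branch
      obtain ⟨qd, hqd⟩ := exists_chromP (E.erase f).card α (E.erase f) le_rfl
        (fun e he => hnef e (Finset.mem_of_mem_erase he))
      -- contraction branch
      have hc2 := contract_card2 hf hSp hcard2
      have hpack : ∃ Ec : Finset (Finset (Option {v : α // v ∉ f})),
          (∀ e ∈ Ec, Even e.card ∧ 2 ≤ e.card) ∧ IsSperner Ec ∧ L0cyc Ec ∧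
          (pairGraph (Ec.filter fun e => e.card = 2)).Connected ∧
          (∀ k : ℕ, countColorings Ec k = countColorings (contractEdges E f) k) ∧
          Ec.card ≤ (contractEdges E f).card := by
        refine ⟨minimalEdges (contractEdges E f),
          minimal_contract_even hf hSp hbig3 hL (fun e he => (hdeg e he).1) hcard2,
          minimalEdges_sperner _,
          l0cyc_minimal (l0cyc_contract hf hSp hbig3 hL) hc2, ?_,
          fun k => count_minimal _ k,
          Finset.card_le_card minimalEdges_subset⟩
        rw [minimalEdges_filter_two_eq hc2]
        exact pairGraph_contract_connected hf (hnef f hf) hconn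
      obtain ⟨Ec, hEcdeg, hEcsp, hEccyc, hEcconn, hEccount, hEccard⟩ := hpack
      obtain ⟨qc, hqc⟩ := exists_chromP Ec.card (Option {v : α // v ∉ f}) Ec le_rfl
        (fun e he => Finset.card_pos.1 (by have := (hEcdeg e he).2; omega))
      have hpoly : p = qd - qc := by
        apply poly_unique
        intro k hk
        have hdc := count_dc E hf (hnef f hf) k
        rw [Polynomial.eval_sub, hqd k hk, hqc k hk, hp k hk, hEccount k]
        have : (countColorings (E.erase f) k : ℝ)
            = (countColorings E k : ℝ) + (countColorings (contractEdges E f) k : ℝ) := by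
          exact_mod_cast congrArg (Nat.cast : ℕ → ℝ) hdc
        linarith
      have hqdpos : 0 < (-1 : ℝ) ^ (Fintype.card α + 1) * qd.eval lam := by
        apply ih α (E.erase f) ?_ ?_ ?_ (l0cyc_erase hL hbig3) ?_ qd hqd lam hl0 hl1
        · rw [Finset.card_erase_of_mem hf]; omega
        · exact fun e he => hdeg e (Finset.mem_of_mem_erase he)
        · exact fun e₁ h₁ e₂ h₂ hs =>
            hSp e₁ (Finset.mem_of_mem_erase h₁) e₂ (Finset.mem_of_mem_erase h₂) hs
        · rw [erase_filter_two_eq (by omega : f.card ≠ 2)]; exact hconn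
      have hn' := card_option_compl (α := α) f
      have hqcpos : 0 < (-1 : ℝ) ^ (Fintype.card (Option {v : α // v ∉ f}) + 1)
          * qc.eval lam := by
        apply ih (Option {v : α // v ∉ f}) Ec ?_ hEcdeg hEcsp hEccyc hEcconn qc hqc lam hl0 hl1
        have hle2 := contractEdges_card_le hf
        omega
      rw [hpoly, Polynomial.eval_sub]
      exact dc_sign_combine hfeven (by omega) (by omega) hqdpos hqcpos
    · -- all edges are 2-edges: graph case
      push_neg at hbigex
      have hall2 : ∀ e ∈ E, e.card = 2 := hbigex
      by_cases hE0 : E = ∅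
      · subst hE0
        have hcard1 : Fintype.card α = 1 :=
          card_eq_one_of_pairGraph_empty hconn (Finset.filter_empty _)
        have hpoly : p = Polynomial.X := by
          apply poly_unique
          intro k hk
          rw [hp k hk, countColorings_empty, hcard1, pow_one, Polynomial.eval_X]
        rw [hpoly, Polynomial.eval_X, hcard1]
        simpa using hl0
      · have hfilter : E.filter (fun e => e.card = 2) = E := Finset.filter_true_of_mem hall2
        have hconnE : (pairGraph E).Connected := by rw [hfilter] at hconn; exact hconn
        have hE1 : 1 ≤ E.card := Finset.card_pos.2 (Finset.nonempty_of_ne_empty hE0)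
        by_cases hdel : ∃ f ∈ E, (pairGraph (E.erase f)).Connected
        · -- delete a non-bridge, contract it as well
          obtain ⟨f, hf, hfconn⟩ := hdel
          have hc2 := contract_all_pairs hall2 hf
          obtain ⟨qd, hqd⟩ := exists_chromP (E.erase f).card α (E.erase f) le_rfl
            (fun e he => hnef e (Finset.mem_of_mem_erase he))
          obtain ⟨qc, hqc⟩ := exists_chromP (contractEdges E f).card
            (Option {v : α // v ∉ f}) (contractEdges E f) le_rfl (fun e he => Finset.card_pos.1 (by rw [hc2 e he]; omega))
          have hpoly : p = qd - qc := by
            apply poly_unique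
            intro k hk
            have hdc := count_dc E hf (hnef f hf) k
            rw [Polynomial.eval_sub, hqd k hk, hqc k hk, hp k hk]
            have : (countColorings (E.erase f) k : ℝ)
                = (countColorings E k : ℝ) + (countColorings (contractEdges E f) k : ℝ) := by
              exact_mod_cast congrArg (Nat.cast : ℕ → ℝ) hdc
            linarith
          have hqdpos : 0 < (-1 : ℝ) ^ (Fintype.card α + 1) * qd.eval lam := by
            apply ih α (E.erase f) ?_ ?_ ?_
              (l0cyc_of_all_pairs (fun e he => hall2 e (Finset.mem_of_mem_erase he))) ?_
              qd hqd lam hl0 hl1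
            · rw [Finset.card_erase_of_mem hf]; omega
            · intro e he
              rw [hall2 e (Finset.mem_of_mem_erase he)]
              exact ⟨⟨1, rfl⟩, le_refl 2⟩
            · exact allpairs_sperner (fun e he => hall2 e (Finset.mem_of_mem_erase he))
            · rw [Finset.filter_true_of_mem (fun e he => hall2 e (Finset.mem_of_mem_erase he))]
              exact hfconn
          have hn' := card_option_compl (α := α) f
          have hqcpos : 0 < (-1 : ℝ) ^ (Fintype.card (Option {v : α // v ∉ f}) + 1)
              * qc.eval lam := by
            apply ih (Option {v : α // v ∉ f}) (contractEdges E f) ?_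
              (fun e he => by rw [hc2 e he]; exact ⟨⟨1, rfl⟩, le_refl 2⟩)
              (allpairs_sperner hc2) (l0cyc_of_all_pairs hc2) ?_ qc hqc lam hl0 hl1
            · have hle2 := contractEdges_card_le hf
              have hfc := hall2 f hf
              omega
            · exact pairGraph_contract_connected hf (hnef f hf) hconn
          rw [hpoly, Polynomial.eval_sub]
          exact dc_sign_combine ⟨1, rfl⟩ (le_refl 2) (by have := hall2 f hf; omega)
            hqdpos hqcpos
        · -- every edge is a bridge: find a pendant vertex and contract its edge
          push_neg at hdel
          obtain ⟨z, w, hzw, hzwE, honly⟩ :=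
            exists_leaf hconnE hall2 (Finset.nonempty_of_ne_empty hE0) hdel
          have hc2 := contract_all_pairs hall2 hzwE
          obtain ⟨qc, hqc⟩ := exists_chromP (contractEdges E {z, w}).card
            (Option {v : α // v ∉ ({z, w} : Finset α)}) (contractEdges E {z, w}) le_rfl
            (fun e he => Finset.card_pos.1 (by rw [hc2 e he]; omega))
          have hpoly : p = (Polynomial.X - 1) * qc := by
            apply poly_unique
            intro k hk
            rw [hp k hk, count_pendant E hzw hzwE honly k, Polynomial.eval_mul,
              Polynomial.eval_sub, Polynomial.eval_X, Polynomial.eval_one, hqc k hk]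
            rw [Nat.cast_mul, Nat.cast_sub hk]
            push_cast
            ring
          have hn' : Fintype.card (Option {v : α // v ∉ ({z, w} : Finset α)}) + 2
              = Fintype.card α + 1 := by
            have := card_option_compl (α := α) ({z, w} : Finset α)
            rw [Finset.card_pair hzw] at this
            exact this
          have hqcpos : 0 < (-1 : ℝ) ^ (Fintype.card (Option {v : α // v ∉ ({z, w} : Finset α)}) + 1)
              * qc.eval lam := by
            apply ih (Option {v : α // v ∉ ({z, w} : Finset α)}) (contractEdges E {z, w}) ?_
              (fun e he => by rw [hc2 e he]; exact ⟨⟨1, rfl⟩, le_refl 2⟩)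
              (allpairs_sperner hc2) (l0cyc_of_all_pairs hc2) ?_ qc hqc lam hl0 hl1
            · have hle2 := contractEdges_card_le hzwE
              omega
            · exact pairGraph_contract_connected hzwE ⟨z, by simp⟩ hconn
          have hkey := neg_one_pow_shift (n := Fintype.card α)
            (n' := Fintype.card (Option {v : α // v ∉ ({z, w} : Finset α)}))
            ⟨1, rfl⟩ (le_refl 2) hn'
          rw [hpoly, Polynomial.eval_mul, Polynomial.eval_sub, Polynomial.eval_X,
            Polynomial.eval_one]
          have hexp : (-1 : ℝ) ^ (Fintype.card α + 1) * ((lam - 1) * qc.eval lam)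
              = (1 - lam) * ((-1 : ℝ) ^
                (Fintype.card (Option {v : α // v ∉ ({z, w} : Finset α)}) + 1) * qc.eval lam) := by
            rw [hkey]; ring
          rw [hexp]
          exact mul_pos (by linarith) hqcpos

end Main
/-- If `H ∈ L0'`, then `(-1)^{|V|+1} P(H, λ) > 0` for all real `0 < λ < 1`. -/
theorem stmt1 {α : Type} [Fintype α] [DecidableEq α] (E : Finset (Finset α))
    (hne : ∀ e ∈ E, e.Nonempty) (hE : MemL0' E)
    (p : Polynomial ℝ)
    (hp : ∀ k : ℕ, 0 < k → p.eval (k : ℝ) = countColorings E k)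
    (lam : ℝ) (hlam0 : 0 < lam) (hlam1 : lam < 1) :
    0 < (-1 : ℝ) ^ (Fintype.card α + 1) * p.eval lam := by
  obtain ⟨⟨heven, hcyc⟩, hconn⟩ := hE
  have hcard2E : ∀ e ∈ E, 2 ≤ e.card := by
    intro e he
    obtain ⟨d, hd⟩ := heven e he
    have := Finset.card_pos.2 (hne e he)
    omega
  have hdeg : ∀ e ∈ minimalEdges E, Even e.card ∧ 2 ≤ e.card := by
    intro e he
    have heE := minimalEdges_subset he
    exact ⟨heven e heE, hcard2E e heE⟩
  exact main_induction (Fintype.card α + (minimalEdges E).card) α (minimalEdges E) le_rfl hdeg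
    (minimalEdges_sperner E) (l0cyc_minimal hcyc hcard2E)
    (by rw [minimalEdges_filter_two_eq hcard2E]; exact hconn)
    p (fun k hk => by rw [hp k hk, count_minimal]) lam hlam0 hlam1
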